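/- arXiv:1203.6462 — 3 statements merged into one kernel-verified Lean document; each statement's English description precedes it below -/
import Mathlib

section
/- An integer n > 1 satisfies ‖n‖ = 3·log₃(n) if and only if n is a power of 3 (n = 3^b for some b ≥ 1). -/
/-- `CanRepr n k` : `n` can be written as an expression in `1, +, ·` using `k` ones. -/
inductive CanRepr : ℕ → ℕ → Prop
  | one : CanRepr 1 1
  | add {a b j k : ℕ} : CanRepr a j → CanRepr b k → CanRepr (a + b) (j + k)
  | mul {a b j k : ℕ} : CanRepr a j → CanRepr b k → CanRepr (a * b) (j + k)

/-- Integer complexity `‖n‖`: least number of ones in an expression for `n`. -/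
noncomputable def cpx (n : ℕ) : ℕ := sInf {k | CanRepr n k}

lemma canRepr_pos {n k : ℕ} (h : CanRepr n k) : 1 ≤ n ∧ 1 ≤ k := by
  induction h with
  | one => exact ⟨le_refl 1, le_refl 1⟩
  | add _ _ ih1 ih2 => omega
  | mul _ _ ih1 ih2 =>
    refine ⟨?_, by omega⟩
    calc 1 = 1 * 1 := by norm_num
    _ ≤ _ := Nat.mul_le_mul ih1.1 ih2.1

lemma add_cube_le {a b j k : ℕ} (ha1 : 1 ≤ a) (hb1 : 1 ≤ b) (hj : 1 ≤ j) (hk : 1 ≤ k)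
    (ha : a ^ 3 ≤ 3 ^ j) (hb : b ^ 3 ≤ 3 ^ k) : (a + b) ^ 3 ≤ 3 ^ (j + k) := by
  rw [pow_add]
  rcases le_or_gt 2 a with ha2 | ha2
  · rcases le_or_gt 2 b with hb2 | hb2
    · -- both ≥ 2 : a + b ≤ a * b
      have hab : a + b ≤ a * b := by nlinarith
      calc (a + b) ^ 3 ≤ (a * b) ^ 3 := Nat.pow_le_pow_left hab 3
        _ = a ^ 3 * b ^ 3 := by ring
        _ ≤ 3 ^ j * 3 ^ k := Nat.mul_le_mul ha hb
    · -- b = 1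
      have hb' : b = 1 := by omega
      subst hb'
      rcases le_or_gt 3 a with ha3 | ha3
      · have h3 : 3 * a ≤ a * a := Nat.mul_le_mul_right a ha3
        have h4 : 3 * (a * a) ≤ a * (a * a) := Nat.mul_le_mul_right (a * a) ha3
        have h1 : (a + 1) ^ 3 ≤ a ^ 3 * 3 := by nlinarith
        calc (a + 1) ^ 3 ≤ a ^ 3 * 3 := h1
          _ ≤ 3 ^ j * 3 ^ k := Nat.mul_le_mul ha (by
            calc 3 = 3 ^ 1 := by norm_num
            _ ≤ 3 ^ k := Nat.pow_le_pow_right (by norm_num) hk)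
      · -- a = 2
        have ha' : a = 2 := by omega
        subst ha'
        have hj2 : 2 ≤ j := by
          by_contra h'
          have : j = 1 := by omega
          subst this
          norm_num at ha
        calc (2 + 1) ^ 3 = 3 ^ 2 * 3 ^ 1 := by norm_num
          _ ≤ 3 ^ j * 3 ^ k :=
            Nat.mul_le_mul (Nat.pow_le_pow_right (by norm_num) hj2)
              (Nat.pow_le_pow_right (by norm_num) hk)
  · -- a = 1
    have ha' : a = 1 := by omega
    subst ha'
    rcases le_or_gt 3 b with hb3 | hb3
    · have h3 : 3 * b ≤ b * b := Nat.mul_le_mul_right b hb3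
      have h4 : 3 * (b * b) ≤ b * (b * b) := Nat.mul_le_mul_right (b * b) hb3
      have h1 : (1 + b) ^ 3 ≤ 3 * b ^ 3 := by nlinarith
      calc (1 + b) ^ 3 ≤ 3 * b ^ 3 := h1
        _ ≤ 3 ^ j * 3 ^ k := Nat.mul_le_mul (by
          calc 3 = 3 ^ 1 := by norm_num
          _ ≤ 3 ^ j := Nat.pow_le_pow_right (by norm_num) hj) hb
    · rcases le_or_gt 2 b with hb2 | hb2
      · have hb' : b = 2 := by omega
        subst hb'
        have hk2 : 2 ≤ k := by
          by_contra h'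
          have : k = 1 := by omega
          subst this
          norm_num at hb
        calc (1 + 2) ^ 3 = 3 ^ 1 * 3 ^ 2 := by norm_num
          _ ≤ 3 ^ j * 3 ^ k :=
            Nat.mul_le_mul (Nat.pow_le_pow_right (by norm_num) hj)
              (Nat.pow_le_pow_right (by norm_num) hk2)
      · have hb' : b = 1 := by omega
        subst hb'
        calc (1 + 1) ^ 3 = 8 := by norm_num
          _ ≤ 3 ^ 1 * 3 ^ 1 := by norm_num
          _ ≤ 3 ^ j * 3 ^ k :=
            Nat.mul_le_mul (Nat.pow_le_pow_right (by norm_num) hj)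
              (Nat.pow_le_pow_right (by norm_num) hk)

lemma canRepr_cube_le {n k : ℕ} (h : CanRepr n k) : n ^ 3 ≤ 3 ^ k := by
  induction h with
  | one => norm_num
  | add ha hb iha ihb =>
    exact add_cube_le (canRepr_pos ha).1 (canRepr_pos hb).1 (canRepr_pos ha).2
      (canRepr_pos hb).2 iha ihb
  | mul ha hb iha ihb =>
    rw [pow_add, mul_pow]
    exact Nat.mul_le_mul iha ihb

lemma canRepr_three : CanRepr 3 3 :=
  CanRepr.add (CanRepr.add CanRepr.one CanRepr.one) CanRepr.one

lemma canRepr_pow3 (b : ℕ) : CanRepr (3 ^ (b + 1)) (3 * (b + 1)) := by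
  induction b with
  | zero => simpa using canRepr_three
  | succ m ih =>
    have := CanRepr.mul ih canRepr_three
    have h1 : 3 ^ (m + 1) * 3 = 3 ^ (m + 2) := by ring
    have h2 : 3 * (m + 1) + 3 = 3 * (m + 2) := by ring
    rwa [h1, h2] at this

lemma cpx_pow3 (b : ℕ) (hb : 1 ≤ b) : cpx (3 ^ b) = 3 * b := by
  obtain ⟨m, rfl⟩ : ∃ m, b = m + 1 := ⟨b - 1, by omega⟩
  have hmem : CanRepr (3 ^ (m + 1)) (3 * (m + 1)) := canRepr_pow3 m
  refine le_antisymm (Nat.sInf_le hmem) ?_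
  have hne : {k | CanRepr (3 ^ (m + 1)) k}.Nonempty := ⟨3 * (m + 1), hmem⟩
  have hinf := Nat.sInf_mem hne
  have h1 : (3 ^ (m + 1)) ^ 3 ≤ 3 ^ (cpx (3 ^ (m + 1))) := canRepr_cube_le hinf
  rw [← pow_mul] at h1
  have := (Nat.pow_le_pow_iff_right (by norm_num : 1 < 3)).mp h1
  omega

theorem cpx_eq_lower_iff_pow_three (n : ℕ) (hn : 1 < n) :
    (cpx n : ℝ) = 3 * Real.logb 3 n ↔ ∃ b : ℕ, 1 ≤ b ∧ n = 3 ^ b := by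
  constructor
  · intro h
    set k := cpx n with hk
    have hn0 : (0 : ℝ) < n := by positivity
    have hlog3 : Real.log 3 ≠ 0 := ne_of_gt (Real.log_pos (by norm_num))
    rw [Real.logb, div_eq_inv_mul] at h
    have hlogeq : (k : ℝ) * Real.log 3 = 3 * Real.log n := by
      field_simp at h ⊢
      linarith [h]
    have hlogeq2 : Real.log ((3 : ℝ) ^ k) = Real.log ((n : ℝ) ^ 3) := by
      rw [Real.log_pow, Real.log_pow]
      push_cast
      linarith
    have hpow : ((3 : ℝ) ^ k) = ((n : ℝ) ^ 3) := by
      have h1 : (0 : ℝ) < (3 : ℝ) ^ k := by positivity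
      have h2 : (0 : ℝ) < (n : ℝ) ^ 3 := by positivity
      calc (3 : ℝ) ^ k = Real.exp (Real.log ((3 : ℝ) ^ k)) := (Real.exp_log h1).symm
        _ = Real.exp (Real.log ((n : ℝ) ^ 3)) := by rw [hlogeq2]
        _ = (n : ℝ) ^ 3 := Real.exp_log h2
    have hnat : (3 : ℕ) ^ k = n ^ 3 := by exact_mod_cast hpow
    have hdvd : n ∣ 3 ^ k := by
      rw [hnat]
      exact dvd_pow_self n (by norm_num)
    obtain ⟨m, _, rfl⟩ := (Nat.dvd_prime_pow Nat.prime_three).mp hdvd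
    refine ⟨m, ?_, rfl⟩
    by_contra h'
    have : m = 0 := by omega
    subst this
    simp at hn
  · rintro ⟨b, hb, rfl⟩
    rw [cpx_pow3 b hb]
    have : ((3 ^ b : ℕ) : ℝ) = (3 : ℝ) ^ b := by push_cast; ring
    rw [this, Real.logb_pow, Real.logb_self_eq_one (by norm_num)]
    push_cast
    ring
end

section
/- For every integer n > 1, ‖2^n − 1‖ ≤ 2n + 2·⌊log₂ n⌋ − 2. -/
/-!
Recurse on the binary digits of `n`: with `m = ⌊n / 2⌋`,
`2 ^ (2m) - 1 = (2 ^ m - 1)(2 ^ m + 1)` costs `2m + 1` ones on top of `2 ^ m - 1`, and an odd last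
digit costs `3` more through `2 ^ (2m+1) - 1 = 2 (2 ^ (2m) - 1) + 1`. Since `⌊log₂ n⌋` counts the
halvings, the total is at most `2n + 2⌊log₂ n⌋ - 2`, starting from `‖3‖ = 3` and `‖7‖ ≤ 6`.
-/

lemma cpx_le_of_canRepr {n k : ℕ} (h : CanRepr n k) : cpx n ≤ k :=
  Nat.sInf_le h

lemma canRepr_two : CanRepr 2 2 :=
  CanRepr.add CanRepr.one CanRepr.one

lemma canRepr_two_pow {m : ℕ} (hm : 1 ≤ m) : CanRepr (2 ^ m) (2 * m) := by
  induction m, hm using Nat.le_induction with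
  | base => exact canRepr_two
  | succ m _ ih => simpa [pow_succ, mul_add] using CanRepr.mul ih canRepr_two

lemma canRepr_mersenne_succ {m j : ℕ} (h : CanRepr (2 ^ m - 1) j) :
    CanRepr (2 ^ (m + 1) - 1) (j + 3) := by
  have e : (2 ^ m - 1) * 2 + 1 = 2 ^ (m + 1) - 1 := by
    have := Nat.one_le_two_pow (n := m)
    rw [pow_succ]; omega
  simpa [e, add_assoc] using (CanRepr.mul h canRepr_two).add CanRepr.one

lemma canRepr_mersenne_two_mul {m j : ℕ} (hm : 1 ≤ m) (h : CanRepr (2 ^ m - 1) j) :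
    CanRepr (2 ^ (2 * m) - 1) (j + (2 * m + 1)) := by
  have e : (2 ^ m - 1) * (2 ^ m + 1) = 2 ^ (2 * m) - 1 := by
    rw [mul_comm, ← Nat.sq_sub_sq, one_pow, ← pow_mul, mul_comm m]
  rw [← e]
  exact h.mul ((canRepr_two_pow hm).add CanRepr.one)

lemma exists_canRepr_mersenne (n : ℕ) (hn : 2 ≤ n) :
    ∃ k, CanRepr (2 ^ n - 1) k ∧ k + 2 ≤ 2 * n + 2 * Nat.log 2 n := by
  induction n using Nat.strong_induction_on with
  | _ n ih =>
    have hlog : Nat.log 2 (n / 2) = Nat.log 2 n - 1 := Nat.log_div_base 2 n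
    have hlog_pos : 0 < Nat.log 2 n := Nat.log_pos one_lt_two hn
    have canRepr_three : CanRepr (2 ^ 2 - 1) 3 := canRepr_two.add CanRepr.one
    obtain rfl | rfl | hn4 : n = 2 ∨ n = 3 ∨ 4 ≤ n := by omega
    · exact ⟨3, canRepr_three, by omega⟩
    · exact ⟨6, canRepr_mersenne_succ canRepr_three, by omega⟩
    obtain ⟨k, hk, hk_le⟩ := ih (n / 2) (by omega) (by omega)
    have hdouble := canRepr_mersenne_two_mul (by omega) hk
    obtain heven | hodd := Nat.mod_two_eq_zero_or_one n
    · rw [show 2 * (n / 2) = n by omega] at hdouble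
      exact ⟨_, hdouble, by omega⟩
    · have hsucc := canRepr_mersenne_succ hdouble
      rw [show 2 * (n / 2) + 1 = n by omega] at hsucc
      exact ⟨_, hsucc, by omega⟩

theorem cpx_mersenne_le' (n : ℕ) (hn : 1 < n) :
    (cpx (2 ^ n - 1) : ℤ) ≤ 2 * n + 2 * Nat.log 2 n - 2 := by
  obtain ⟨k, hk, hk_le⟩ := exists_canRepr_mersenne n hn
  have := cpx_le_of_canRepr hk
  omega
end

section
/- For any positive integers a, b with ‖a‖ ≤ ‖b‖ and a + b = n and ‖a‖ + ‖b‖ = ‖n‖, and any N with ‖n‖ ≤ N, the inequality E(‖a‖) + E(N)/E(‖a‖) ≥ n holds; consequently E(‖a‖) ≤ (n − √(n² − 4E(N)))/2 whenever n² ≥ 4E(N). -/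
set_option maxHeartbeats 800000

/-- `E n` : the largest integer of complexity `n`. -/
noncomputable def E (n : ℕ) : ℕ := sSup {m | cpx m = n}

lemma canRepr_bounds {m k : ℕ} (h : CanRepr m k) : 1 ≤ m ∧ 1 ≤ k ∧ m ≤ 2 ^ k := by
  induction h with
  | one => simp
  | @add x y j k h1 h2 ih1 ih2 =>
    obtain ⟨a1, j1, b1⟩ := ih1; obtain ⟨a2, j2, b2⟩ := ih2
    refine ⟨by omega, by omega, ?_⟩
    have e1 : (2:ℕ) ≤ 2 ^ j := Nat.one_lt_two_pow (by omega)
    have e2 : (2:ℕ) ≤ 2 ^ k := Nat.one_lt_two_pow (by omega)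
    calc x + y ≤ 2 ^ j + 2 ^ k := by omega
      _ ≤ 2 ^ j * 2 ^ k := by nlinarith
      _ = 2 ^ (j + k) := (pow_add 2 j k).symm
  | @mul x y j k h1 h2 ih1 ih2 =>
    obtain ⟨a1, j1, b1⟩ := ih1; obtain ⟨a2, j2, b2⟩ := ih2
    refine ⟨Nat.mul_pos a1 a2, by omega, ?_⟩
    rw [pow_add]; exact Nat.mul_le_mul b1 b2

lemma canRepr_self {m : ℕ} (h : 1 ≤ m) : CanRepr m m := by
  induction m with
  | zero => omega
  | succ k ih =>
    rcases Nat.eq_zero_or_pos k with hk | hk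
    · subst hk; exact CanRepr.one
    · exact CanRepr.add (ih hk) CanRepr.one

lemma cpx_spec {m : ℕ} (h : 1 ≤ m) : CanRepr m (cpx m) :=
  Nat.sInf_mem ⟨m, canRepr_self h⟩

lemma cpx_le {m k : ℕ} (h : CanRepr m k) : cpx m ≤ k := Nat.sInf_le h

lemma cpx_pos {m : ℕ} (h : 1 ≤ m) : 1 ≤ cpx m := (canRepr_bounds (cpx_spec h)).2.1

lemma le_two_pow_cpx {m : ℕ} (h : 1 ≤ m) : m ≤ 2 ^ cpx m :=
  (canRepr_bounds (cpx_spec h)).2.2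

lemma setE_bdd (N : ℕ) : BddAbove {m | cpx m = N} := by
  refine ⟨2 ^ N, fun m hm => ?_⟩
  rcases Nat.eq_zero_or_pos m with h | h
  · subst h; positivity
  · have h2 := le_two_pow_cpx h
    rwa [Set.mem_setOf_eq.mp hm] at h2

lemma cpx_succ_le {m : ℕ} (h : 1 ≤ m) : cpx (m + 1) ≤ cpx m + 1 :=
  cpx_le (CanRepr.add (cpx_spec h) CanRepr.one)

lemma exists_eq_cpx_aux {m N : ℕ} (hm : 1 ≤ m) (h : cpx m ≤ N) :
    ∀ t, N ≤ cpx (m + t) → ∃ m', m ≤ m' ∧ cpx m' = N := by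
  intro t
  induction t with
  | zero => exact fun ht => ⟨m, le_rfl, by rw [Nat.add_zero] at ht; omega⟩
  | succ k ih =>
    intro ht
    by_cases hk : N ≤ cpx (m + k)
    · exact ih hk
    · push_neg at hk
      have hstep : cpx (m + k + 1) ≤ cpx (m + k) + 1 := cpx_succ_le (by omega)
      rw [← Nat.add_assoc] at ht
      exact ⟨m + k + 1, by omega, by omega⟩

lemma exists_eq_cpx {m N : ℕ} (hm : 1 ≤ m) (h : cpx m ≤ N) : ∃ m', m ≤ m' ∧ cpx m' = N := by
  refine exists_eq_cpx_aux hm h (2 ^ N + 1) ?_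
  have h1 : m + (2 ^ N + 1) ≤ 2 ^ cpx (m + (2 ^ N + 1)) :=
    le_two_pow_cpx (le_trans hm (Nat.le_add_right _ _))
  by_contra hc
  push_neg at hc
  have h2 : (2:ℕ) ^ cpx (m + (2 ^ N + 1)) ≤ 2 ^ N :=
    Nat.pow_le_pow_right (by norm_num) (by omega)
  omega

lemma le_E {m N : ℕ} (hm : 1 ≤ m) (h : cpx m ≤ N) : m ≤ E N := by
  obtain ⟨m', hmm', hm'⟩ := exists_eq_cpx hm h
  exact hmm'.trans (le_csSup (setE_bdd N) hm')

lemma cpx_E {N m : ℕ} (hm : cpx m = N) : cpx (E N) = N := by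
  have hne : ({x | cpx x = N} : Set ℕ).Nonempty := ⟨m, hm⟩
  exact Nat.sSup_mem hne (setE_bdd N)

theorem smallest_addend_bound (a b n N : ℕ) (ha : 1 ≤ a) (hb : 1 ≤ b)
    (hab : cpx a ≤ cpx b) (hsum : a + b = n) (hcpx : cpx a + cpx b = cpx n)
    (hN : cpx n ≤ N) :
    (E (cpx a) : ℝ) + (E N : ℝ) / (E (cpx a) : ℝ) ≥ n ∧
      ((n : ℝ) ^ 2 ≥ 4 * E N →
        (E (cpx a) : ℝ) ≤ ((n : ℝ) - Real.sqrt ((n : ℝ) ^ 2 - 4 * E N)) / 2) := by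
  set A := E (cpx a) with hA
  set B := E (cpx b) with hB
  have haA : a ≤ A := le_E ha le_rfl
  have hbB : b ≤ B := le_E hb le_rfl
  have hA1 : 1 ≤ A := ha.trans haA
  have hB1 : 1 ≤ B := hb.trans hbB
  have hcA : cpx A = cpx a := cpx_E rfl
  have hcB : cpx B = cpx b := cpx_E rfl
  -- A * B ≤ E N
  have hrep : CanRepr (A * B) (cpx A + cpx B) := CanRepr.mul (cpx_spec hA1) (cpx_spec hB1)
  have hABle : cpx (A * B) ≤ N := by
    have h6 := cpx_le hrep
    rw [hcA, hcB] at h6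
    omega
  have hABE : A * B ≤ E N := le_E (Nat.mul_pos hA1 hB1) hABle
  -- A ≤ B
  have hAB : A ≤ B := le_E hA1 (by rw [hcA]; exact hab)
  -- pass to reals
  have hxpos : (0:ℝ) < (A:ℝ) := by exact_mod_cast hA1
  have h3 : (A : ℝ) * (B : ℝ) ≤ (E N : ℝ) := by exact_mod_cast hABE
  have h4 : (A : ℝ) ≤ (B : ℝ) := by exact_mod_cast hAB
  have hbe : (B : ℝ) ≤ (E N : ℝ) / (A : ℝ) := by
    rw [le_div_iff₀ hxpos]
    nlinarith
  have hna : (a : ℝ) ≤ (A : ℝ) := by exact_mod_cast haA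
  have hnb : (b : ℝ) ≤ (B : ℝ) := by exact_mod_cast hbB
  have hn : (n : ℝ) = (a : ℝ) + (b : ℝ) := by exact_mod_cast hsum.symm
  have h1 : (A : ℝ) + (E N : ℝ) / (A : ℝ) ≥ n := by
    rw [hn]; linarith
  refine ⟨h1, fun hn2 => ?_⟩
  have hA2 : (A : ℝ) ^ 2 ≤ (E N : ℝ) := by nlinarith
  have hnpos : (0:ℝ) ≤ (n : ℝ) := by positivity
  have hhalf : 2 * (A : ℝ) ≤ n := by nlinarith
  have hkey : (A : ℝ) ^ 2 - (n : ℝ) * (A : ℝ) + (E N : ℝ) ≥ 0 := by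
    rw [hn]; nlinarith
  have hsq : Real.sqrt ((n : ℝ) ^ 2 - 4 * E N) ≤ (n : ℝ) - 2 * (A : ℝ) := by
    have h5 : Real.sqrt ((n : ℝ) ^ 2 - 4 * E N) ≤ Real.sqrt (((n : ℝ) - 2 * (A : ℝ)) ^ 2) :=
      Real.sqrt_le_sqrt (by nlinarith)
    rwa [Real.sqrt_sq (by linarith)] at h5
  linarith
end
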